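/- The function F(x) := ((sin x)/x − (2 + cos x)/3)/(x − sin x)², equivalently F(x) = (3·sin x − x·cos x − 2x)/(3x³ − 6x²·sin x + 3x·sin² x), is strictly increasing on the open interval (0, π/2). -/

import Mathlib

/-!
The derivative of `F` is `P x / (3 x² (x - sin x)³)`, where `P` (`derivNumerator`), after
using the double-angle formulas, is linear in `sin x`, `cos x`, `sin 2x` and `cos 2x` with
coefficients of fixed sign on `x ≥ 0`. Replacing each of these by the appropriate alternating
Taylor bound makes every term of degree below 8 cancel and leaves `P x ≥ x⁸ R(x²)` with a cubic
`R` that is positive for `x² < 5/2`, hence on `(0, π/2)`.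
-/

open Real Set Finset
open scoped Nat

theorem nonneg_of_hasDerivAt_of_nonneg {f f' : ℝ → ℝ}
    (hf : ∀ y, HasDerivAt f (f' y) y) (hf₀ : f 0 = 0) (hf' : ∀ y, 0 ≤ y → 0 ≤ f' y) {x : ℝ}
    (hx : 0 ≤ x) : 0 ≤ f x := by
  have hmono : MonotoneOn f (Ici 0) :=
    monotoneOn_of_hasDerivWithinAt_nonneg (convex_Ici 0)
      (fun y _ => (hf y).continuousAt.continuousWithinAt) (fun y _ => (hf y).hasDerivWithinAt)
      (fun y hy => hf' y (interior_subset hy))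
  simpa [hf₀] using hmono self_mem_Ici hx hx

theorem hasDerivAt_pow_succ_div_factorial (m : ℕ) (x : ℝ) :
    HasDerivAt (fun y : ℝ => y ^ (m + 1) / (m + 1)!) (x ^ m / m !) x := by
  refine ((hasDerivAt_pow (m + 1) x).div_const _).congr_deriv ?_
  rw [Nat.factorial_succ, Nat.cast_mul, Nat.add_sub_cancel, mul_div_mul_left]
  positivity

namespace Real

noncomputable def sinTaylor (n : ℕ) (x : ℝ) : ℝ :=
  ∑ k ∈ range n, (-1) ^ k * (x ^ (2 * k + 1) / (2 * k + 1)!)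

noncomputable def cosTaylor (n : ℕ) (x : ℝ) : ℝ :=
  ∑ k ∈ range n, (-1) ^ k * (x ^ (2 * k) / (2 * k)!)

theorem cosTaylor_succ (n : ℕ) (x : ℝ) :
    cosTaylor (n + 1) x =
      1 - ∑ k ∈ range n, (-1) ^ k * (x ^ (2 * k + 1 + 1) / (2 * k + 1 + 1)!) := by
  simp only [cosTaylor, sum_range_succ', pow_succ (-1 : ℝ), mul_add, mul_one, mul_zero, pow_zero,
    Nat.factorial_zero, Nat.cast_one, div_one, sub_eq_neg_add, ← sum_neg_distrib, mul_neg_one,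
    neg_mul]

theorem sinTaylor_zero_right (n : ℕ) : sinTaylor n 0 = 0 := by
  simp [sinTaylor]

theorem cosTaylor_succ_zero_right (n : ℕ) : cosTaylor (n + 1) 0 = 1 := by
  simp [cosTaylor_succ]

theorem hasDerivAt_sinTaylor (n : ℕ) (x : ℝ) : HasDerivAt (sinTaylor n) (cosTaylor n x) x :=
  HasDerivAt.fun_sum fun k _ => (hasDerivAt_pow_succ_div_factorial (2 * k) x).const_mul _

theorem hasDerivAt_cosTaylor_succ (n : ℕ) (x : ℝ) :
    HasDerivAt (cosTaylor (n + 1)) (-sinTaylor n x) x := by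
  rw [funext (cosTaylor_succ n), sinTaylor]
  exact (HasDerivAt.fun_sum fun k _ =>
    (hasDerivAt_pow_succ_div_factorial (2 * k + 1) x).const_mul _).const_sub 1

theorem neg_one_pow_mul_sin_sub_sinTaylor_nonneg_of_cos {n : ℕ}
    (hcos : ∀ y, 0 ≤ y → 0 ≤ (-1) ^ n * (cos y - cosTaylor n y)) {x : ℝ} (hx : 0 ≤ x) :
    0 ≤ (-1) ^ n * (sin x - sinTaylor n x) :=
  nonneg_of_hasDerivAt_of_nonneg
    (fun y => ((hasDerivAt_sin y).sub (hasDerivAt_sinTaylor n y)).const_mul _)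
    (by simp [sinTaylor_zero_right]) hcos hx

theorem neg_one_pow_succ_mul_cos_sub_cosTaylor_nonneg_of_sin {n : ℕ}
    (hsin : ∀ y, 0 ≤ y → 0 ≤ (-1) ^ n * (sin y - sinTaylor n y)) {x : ℝ} (hx : 0 ≤ x) :
    0 ≤ (-1) ^ (n + 1) * (cos x - cosTaylor (n + 1) x) :=
  nonneg_of_hasDerivAt_of_nonneg
    (fun y => ((hasDerivAt_cos y).sub (hasDerivAt_cosTaylor_succ n y)).const_mul _)
    (by simp [cosTaylor_succ_zero_right])
    (fun y hy => by convert hsin y hy using 1; ring) hx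

theorem neg_one_pow_succ_mul_cos_sub_cosTaylor_succ_nonneg (n : ℕ) {x : ℝ} (hx : 0 ≤ x) :
    0 ≤ (-1) ^ (n + 1) * (cos x - cosTaylor (n + 1) x) := by
  induction n generalizing x with
  | zero => simpa [cosTaylor] using cos_le_one x
  | succ n ih =>
    exact neg_one_pow_succ_mul_cos_sub_cosTaylor_nonneg_of_sin
      (fun y hy => neg_one_pow_mul_sin_sub_sinTaylor_nonneg_of_cos (fun z hz => ih hz) hy) hx

theorem neg_one_pow_succ_mul_sin_sub_sinTaylor_succ_nonneg (n : ℕ) {x : ℝ} (hx : 0 ≤ x) :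
    0 ≤ (-1) ^ (n + 1) * (sin x - sinTaylor (n + 1) x) :=
  neg_one_pow_mul_sin_sub_sinTaylor_nonneg_of_cos
    (fun _ hy => neg_one_pow_succ_mul_cos_sub_cosTaylor_succ_nonneg n hy) hx

end Real

noncomputable def F (x : ℝ) : ℝ :=
  (sin x / x - (2 + cos x) / 3) / (x - sin x) ^ 2

noncomputable def derivNumerator (x : ℝ) : ℝ :=
  x ^ 3 * sin x + x ^ 2 * cos x + 2 * x ^ 2 + (x ^ 2 + 3) / 2 * (1 - cos (2 * x)) - 9 * x * sin x +
    3 * x / 2 * sin (2 * x)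

theorem hasDerivAt_F {x : ℝ} (hx : 0 < x) :
    HasDerivAt F (derivNumerator x / (3 * x ^ 2 * (x - sin x) ^ 3)) x := by
  have hxs : x - sin x ≠ 0 := (sub_pos.2 (sin_lt hx)).ne'
  have hnum : HasDerivAt (fun t : ℝ => sin t / t - (2 + cos t) / 3)
      ((cos x * x - sin x * 1) / x ^ 2 - (0 + -sin x) / 3) x :=
    ((hasDerivAt_sin x).div (hasDerivAt_id x) hx.ne').sub
      (((hasDerivAt_const x 2).add (hasDerivAt_cos x)).div_const 3)
  have hden : HasDerivAt (fun t : ℝ => (t - sin t) ^ 2) (2 * (x - sin x) * (1 - cos x)) x :=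
    (((hasDerivAt_id' x).sub (hasDerivAt_sin x)).fun_pow 2).congr_deriv (by norm_num)
  refine (hnum.div hden (pow_ne_zero 2 hxs)).congr_deriv ?_
  rw [derivNumerator, cos_two_mul, sin_two_mul]
  field_simp
  linear_combination 2 * (3 - x ^ 2) * sin_sq_add_cos_sq x

theorem polynomial_le_derivNumerator {x : ℝ} (hx : 0 ≤ x) :
    x ^ 8 / 180 - x ^ 10 / 1200 + 2147 * x ^ 12 / 39916800 - 103 * x ^ 14 / 23950080 ≤
      derivNumerator x := by
  have h2x : 0 ≤ 2 * x := by positivity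
  have sin_lo :=
    mul_nonneg (pow_nonneg hx 3) (neg_one_pow_succ_mul_sin_sub_sinTaylor_succ_nonneg 5 hx)
  have sin_up := mul_nonneg hx (neg_one_pow_succ_mul_sin_sub_sinTaylor_succ_nonneg 4 hx)
  have cos_lo := mul_nonneg (sq_nonneg x) (neg_one_pow_succ_mul_cos_sub_cosTaylor_succ_nonneg 5 hx)
  have cos2_up := mul_nonneg (by positivity : 0 ≤ x ^ 2 + 3)
    (neg_one_pow_succ_mul_cos_sub_cosTaylor_succ_nonneg 6 h2x)
  have sin2_lo := mul_nonneg hx (neg_one_pow_succ_mul_sin_sub_sinTaylor_succ_nonneg 5 h2x)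
  norm_num [sinTaylor, cosTaylor, sum_range_succ] at sin_lo sin_up cos_lo cos2_up sin2_lo
  rw [derivNumerator]
  linarith

theorem derivNumerator_pos {x : ℝ} (hx₀ : 0 < x) (hx : x < π / 2) : 0 < derivNumerator x := by
  have hx2 : x ^ 2 < 5 / 2 := by nlinarith [pi_lt_d2]
  have hx6 : x ^ 6 < 125 / 8 := by
    rw [show x ^ 6 = (x ^ 2) ^ 3 by ring]
    exact (pow_lt_pow_left₀ hx2 (sq_nonneg x) three_ne_zero).trans_eq (by norm_num)
  have hR : 0 < 1 / 180 - x ^ 2 / 1200 + 2147 * x ^ 4 / 39916800 - 103 * x ^ 6 / 23950080 := by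
    linarith [pow_nonneg (sq_nonneg x) 2]
  have hpoly := mul_pos (pow_pos hx₀ 8) hR
  linarith [polynomial_le_derivNumerator hx₀.le]

theorem F_strictMonoOn :
    StrictMonoOn (fun x : ℝ => (sin x / x - (2 + cos x) / 3) / (x - sin x) ^ 2) (Ioo 0 (π / 2)) := by
  refine strictMonoOn_of_hasDerivWithinAt_pos (f := F) (convex_Ioo 0 (π / 2))
    (fun x hx => (hasDerivAt_F hx.1).continuousAt.continuousWithinAt)
    (fun x hx => (hasDerivAt_F (interior_subset hx).1).hasDerivWithinAt) (fun x hx => ?_)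
  obtain ⟨hx₀, hxπ⟩ : x ∈ Ioo 0 (π / 2) := by rwa [interior_Ioo] at hx
  have hxs : 0 < x - sin x := sub_pos.2 (sin_lt hx₀)
  exact div_pos (derivNumerator_pos hx₀ hxπ) (by positivity)
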